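/- Let k ≥ 1 be an integer and let T be a finite rooted tree with n ≥ 1 vertices in which every vertex has exactly 0 or 2 children. Then the vertex set V can be partitioned into (possibly empty) sets B_1, X_1, B_2, X_2, …, X_{k−1}, B_k such that: (P1) for each 1 ≤ i ≤ k, every connected component of the subgraph induced on B_i has cardinality at most n^{1/k} (as a real-number bound); (P2) for each 1 ≤ i ≤ k−1, every vertex of X_i has at least one child in B_1 ∪ X_1 ∪ ⋯ ∪ X_{i−1} ∪ B_i; and (P3) for each 1 ≤ i ≤ k, every child of every vertex of B_i lies in B_1 ∪ X_1 ∪ ⋯ ∪ X_{i−1} ∪ B_i. -/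

import Mathlib

open Function

/-! Let `τ = ⌊n ^ (1 / k)⌋` and call a vertex heavy for a set `S` when its subtree contains more
than `τ` vertices of `S`. Starting from `S = V`, each round puts the light vertices of `S` into
`B_i`, keeps as the next `S` its heavy core (heavy vertices all of whose children are heavy) and
puts the rest of `S` into `X_i`. (P3) holds because lightness passes to descendants, and (P2)
because a heavy vertex outside the core has a light child.
A component of `B_i` lies in the subtree of its top vertex, which is light, so it has at most `τ`
vertices. Core vertices are branch points of the binary heavy part, so each of them comes with an
extra heavy subtree, disjoint from the others, carrying more than `τ` vertices of `S`: the core is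
smaller than `S` by a factor `τ + 1`. After `k - 1` rounds fewer than `τ + 1 > n ^ (1 / k)`
vertices are left, and they are all light, forming `B_k`. -/

/-- Adjacency (parent/child relation) restricted to the subset `S`: connected
components of `S` are taken w.r.t. this relation. -/
def adjOn {V : Type*} (par : V → V) (S : Set V) (u v : V) : Prop :=
  u ∈ S ∧ v ∈ S ∧ u ≠ v ∧ (par u = v ∨ par v = u)

/-- The union `B₁ ∪ X₁ ∪ ⋯ ∪ X_{i−1} ∪ B_i`. -/
def lowerUnion {V : Type*} (B X : ℕ → Set V) (i : ℕ) : Set V :=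
  (⋃ j ∈ Set.Icc 1 i, B j) ∪ ⋃ j ∈ Set.Icc 1 (i - 1), X j

section Subtree

variable {V : Type*}

def subtree (par : V → V) (v : V) : Set V := {u | ∃ m, par^[m] u = v}

def children (par : V → V) (v : V) : Set V := {u | u ≠ v ∧ par u = v}

variable {par : V → V}

lemma mem_subtree_self (v : V) : v ∈ subtree par v := ⟨0, rfl⟩

lemma mem_subtree_of_mem_children {u v : V} (h : u ∈ children par v) : u ∈ subtree par v :=
  ⟨1, h.2⟩

lemma subtree_subset_of_mem {u v : V} (h : u ∈ subtree par v) : subtree par u ⊆ subtree par v := by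
  obtain ⟨e, he⟩ := h
  rintro w ⟨a, ha⟩
  exact ⟨e + a, by rw [iterate_add_apply, ha, he]⟩

lemma par_mem_subtree {u v : V} (h : u ∈ subtree par v) (huv : u ≠ v) : par u ∈ subtree par v := by
  obtain ⟨_ | m, hm⟩ := h
  · exact absurd hm huv
  · exact ⟨m, by rwa [← iterate_succ_apply]⟩

lemma eq_or_exists_mem_children_of_mem_subtree {u v : V} (h : u ∈ subtree par v) :
    u = v ∨ ∃ c ∈ children par v, u ∈ subtree par c := by
  obtain ⟨m, hm⟩ := h
  induction m with
  | zero => exact .inl hm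
  | succ m ih =>
    rw [iterate_succ_apply'] at hm
    by_cases hc : par^[m] u = v
    · exact ih hc
    · exact .inr ⟨_, ⟨hc, hm⟩, m, rfl⟩

lemma subtree_eq_singleton {v : V} (h : children par v = ∅) : subtree par v = {v} := by
  refine Set.Subset.antisymm (fun u hu => ?_) (by simpa using mem_subtree_self v)
  obtain rfl | ⟨c, hc, -⟩ := eq_or_exists_mem_children_of_mem_subtree hu
  · rfl
  · rw [h] at hc
    exact hc.elim

lemma subtree_subset_insert_union {v a b : V} (h : children par v = {a, b}) :
    subtree par v ⊆ insert v (subtree par a ∪ subtree par b) := by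
  intro u hu
  obtain rfl | ⟨c, hc, hu⟩ := eq_or_exists_mem_children_of_mem_subtree hu
  · exact Set.mem_insert u _
  · rw [h] at hc
    obtain rfl | rfl := hc
    · exact .inr (.inl hu)
    · exact .inr (.inr hu)

lemma mem_subtree_or_mem_subtree {w a b : V} (ha : w ∈ subtree par a) (hb : w ∈ subtree par b) :
    a ∈ subtree par b ∨ b ∈ subtree par a := by
  obtain ⟨p, rfl⟩ := ha
  obtain ⟨q, rfl⟩ := hb
  rcases le_total p q with h | h
  · exact .inl ⟨q - p, by rw [← iterate_add_apply, Nat.sub_add_cancel h]⟩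
  · exact .inr ⟨p - q, by rw [← iterate_add_apply, Nat.sub_add_cancel h]⟩

lemma mem_of_reflTransGen_adjOn {A : Set V} {v u : V} (hv : v ∈ A)
    (h : Relation.ReflTransGen (adjOn par A) v u) : u ∈ A := by
  induction h with
  | refl => exact hv
  | tail _ hadj _ => exact hadj.2.1

end Subtree

section RootedTree

variable {V : Type*} {par : V → V} {r : V}
  (hroot : par r = r) (hreach : ∀ v : V, ∃ m : ℕ, par^[m] v = r)
include hroot hreach

/-- A periodic point of `par` is fixed by a large iterate of `par`, which sends it to the root. -/
lemma eq_root_of_isPeriodicPt {v : V} {c : ℕ} (hc : c ≠ 0) (h : IsPeriodicPt par c v) :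
    v = r := by
  obtain ⟨m, hm⟩ := hreach v
  have hle : m ≤ c * m := Nat.le_mul_of_pos_left m (Nat.pos_of_ne_zero hc)
  calc v = par^[c * m - m] (par^[m] v) := by
          rw [← iterate_add_apply, Nat.sub_add_cancel hle, (h.mul_const m).eq]
    _ = r := by rw [hm, iterate_fixed hroot]

lemma eq_of_mem_subtree_of_mem_subtree {u v : V} (huv : u ∈ subtree par v)
    (hvu : v ∈ subtree par u) : u = v := by
  obtain ⟨a, ha⟩ := huv
  obtain ⟨b, hb⟩ := hvu
  rcases Nat.eq_zero_or_pos (b + a) with h | h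
  · rwa [Nat.eq_zero_of_add_eq_zero_left h] at ha
  · have hu : u = r := eq_root_of_isPeriodicPt hroot hreach h.ne'
      (show par^[b + a] u = u by rw [iterate_add_apply, ha, hb])
    subst hu
    rwa [iterate_fixed hroot] at ha

lemma notMem_subtree_of_mem_children {u v : V} (hu : u ∈ children par v) :
    v ∉ subtree par u :=
  fun h => hu.1 (eq_of_mem_subtree_of_mem_subtree hroot hreach (mem_subtree_of_mem_children hu) h)

lemma ncard_subtree_lt [Finite V] {u v : V} (hu : u ∈ children par v) :
    (subtree par u).ncard < (subtree par v).ncard :=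
  Set.ncard_lt_ncard ⟨subtree_subset_of_mem (mem_subtree_of_mem_children hu),
    fun h => notMem_subtree_of_mem_children hroot hreach hu (h (mem_subtree_self v))⟩

lemma tree_induction [Finite V] {P : V → Prop} (h : ∀ v, (∀ u ∈ children par v, P u) → P v)
    (v : V) : P v :=
  (measure fun v => (subtree par v).ncard).wf.induction v
    fun v ih => h v fun u hu => ih u (ncard_subtree_lt hroot hreach hu)

lemma disjoint_subtree_of_mem_children {v a b : V} (ha : a ∈ children par v)
    (hb : b ∈ children par v) (hab : a ≠ b) : Disjoint (subtree par a) (subtree par b) := by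
  have key : ∀ {x y}, x ∈ children par v → y ∈ children par v → x ≠ y → x ∉ subtree par y :=
    fun hx hy hxy h => notMem_subtree_of_mem_children hroot hreach hy
      (hx.2 ▸ par_mem_subtree h hxy)
  refine Set.disjoint_left.2 fun w hwa hwb => ?_
  rcases mem_subtree_or_mem_subtree hwa hwb with h | h
  · exact key ha hb hab h
  · exact key hb ha hab.symm h

/-- The topmost vertex `m` of a connected set is the one with the largest subtree: its parent,
if adjacent and in the set, would have a larger one. -/
lemma exists_component_subset_subtree [Finite V] {A : Set V} {v : V} (hv : v ∈ A) :
    ∃ m ∈ A, {u | Relation.ReflTransGen (adjOn par A) v u} ⊆ subtree par m ∩ A := by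
  set C := {u | Relation.ReflTransGen (adjOn par A) v u}
  obtain ⟨m, hmC, hmax⟩ := C.exists_max_image (fun u => (subtree par u).ncard) C.toFinite
    ⟨v, .refl⟩
  have hdown : ∀ u, Relation.ReflTransGen (adjOn par A) m u → u ∈ subtree par m := by
    intro u hu
    induction hu with
    | refl => exact mem_subtree_self m
    | @tail b c _ hadj ih =>
      obtain ⟨hbA, hcA, hne, hpar | hpar⟩ := hadj
      · by_cases hbm : b = m
        · subst hbm
          have hcC : c ∈ C := hmC.tail ⟨hbA, hcA, hne, .inl hpar⟩
          exact absurd (hmax c hcC) (ncard_subtree_lt hroot hreach ⟨hne, hpar⟩).not_ge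
        · exact hpar ▸ par_mem_subtree ih hbm
      · exact subtree_subset_of_mem ih (mem_subtree_of_mem_children ⟨hne.symm, hpar⟩)
  have hsymm : Std.Symm (adjOn par A) := ⟨fun _ _ h => ⟨h.2.1, h.1, h.2.2.1.symm, h.2.2.2.symm⟩⟩
  refine ⟨m, mem_of_reflTransGen_adjOn hv hmC,
    fun u hu => ⟨hdown u ?_, mem_of_reflTransGen_adjOn hv hu⟩⟩
  exact (Relation.ReflTransGen.stdSymm.symm _ _ hmC).trans hu

end RootedTree

section Weight

variable {V : Type*} {par : V → V}

noncomputable def weight (par : V → V) (S : Set V) (v : V) : ℕ := (subtree par v ∩ S).ncard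

lemma subtree_inter_subset_insert {v a b : V} (h : children par v = {a, b}) (S : Set V) :
    subtree par v ∩ S ⊆ insert v (subtree par a ∩ S ∪ subtree par b ∩ S) := by
  rintro u ⟨hu, huS⟩
  rcases subtree_subset_insert_union h hu with rfl | hu | hu
  · exact Set.mem_insert u _
  · exact .inr (.inl ⟨hu, huS⟩)
  · exact .inr (.inr ⟨hu, huS⟩)

lemma weight_root {r : V} (hreach : ∀ v : V, ∃ m : ℕ, par^[m] v = r) (S : Set V) :
    weight par S r = S.ncard := by
  rw [weight, show subtree par r = Set.univ from Set.eq_univ_of_forall hreach, Set.univ_inter]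

variable [Finite V]

lemma weight_le_weight_of_mem_subtree {u v : V} (h : u ∈ subtree par v) (S : Set V) :
    weight par S u ≤ weight par S v :=
  Set.ncard_le_ncard (Set.inter_subset_inter_left _ (subtree_subset_of_mem h))

lemma weight_le_ncard (S : Set V) (v : V) : weight par S v ≤ S.ncard :=
  Set.ncard_le_ncard Set.inter_subset_right

lemma weight_le_one_of_children_eq_empty {v : V} (h : children par v = ∅) (S : Set V) :
    weight par S v ≤ 1 := by
  rw [weight, subtree_eq_singleton h]
  exact (Set.ncard_le_ncard Set.inter_subset_left).trans (Set.ncard_singleton v).le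

lemma weight_le_add_add_one {v a b : V} (h : children par v = {a, b}) (S : Set V) :
    weight par S v ≤ weight par S a + weight par S b + 1 :=
  (Set.ncard_le_ncard (subtree_inter_subset_insert h S)).trans <|
    (Set.ncard_insert_le _ _).trans (Nat.add_le_add_right (Set.ncard_union_le _ _) 1)

lemma weight_le_add_of_notMem {v a b : V} (h : children par v = {a, b}) {S : Set V}
    (hv : v ∉ S) : weight par S v ≤ weight par S a + weight par S b := by
  have hsub := (Set.subset_insert_iff_of_notMem (fun h => hv h.2)).1
    (subtree_inter_subset_insert h S)
  exact (Set.ncard_le_ncard hsub).trans (Set.ncard_union_le _ _)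

variable {r : V} (hroot : par r = r) (hreach : ∀ v : V, ∃ m : ℕ, par^[m] v = r)
include hroot hreach

lemma weight_add_weight_le {v a b : V} (ha : a ∈ children par v) (hb : b ∈ children par v)
    (hab : a ≠ b) (S : Set V) : weight par S a + weight par S b ≤ weight par S v := by
  have hdisj := (disjoint_subtree_of_mem_children hroot hreach ha hb hab).mono
    (Set.inter_subset_left (t := S)) (Set.inter_subset_left (t := S))
  rw [weight, weight, ← Set.ncard_union_eq hdisj, ← Set.union_inter_distrib_right]
  exact Set.ncard_le_ncard (Set.inter_subset_inter_left _ (Set.union_subset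
    (subtree_subset_of_mem (mem_subtree_of_mem_children ha))
    (subtree_subset_of_mem (mem_subtree_of_mem_children hb))))

end Weight

section HeavyCore

variable {V : Type*} {par : V → V} {τ : ℕ} {S : Set V}

def heavyCore (par : V → V) (τ : ℕ) (S : Set V) : Set V :=
  {v | v ∈ S ∧ τ < weight par S v ∧ ∀ u ∈ children par v, τ < weight par S u}

variable [Finite V]

lemma weight_heavyCore_eq_zero {v : V} (hv : weight par S v ≤ τ) :
    weight par (heavyCore par τ S) v = 0 := by
  refine (Set.ncard_eq_zero (Set.toFinite _)).2 <|
    Set.eq_empty_iff_forall_notMem.2 fun u ⟨hu, huC⟩ => ?_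
  exact (huC.2.1.trans_le (weight_le_weight_of_mem_subtree hu S)).not_ge hv

lemma exists_children_eq_pair
    (hbin : ∀ v, (children par v).ncard = 0 ∨ (children par v).ncard = 2)
    (hτ : 1 ≤ τ) {v : V} (hv : τ < weight par S v) :
    ∃ a b, a ≠ b ∧ children par v = {a, b} := by
  rcases hbin v with h | h
  · have := weight_le_one_of_children_eq_empty ((Set.ncard_eq_zero (Set.toFinite _)).1 h) S
    omega
  · exact Set.ncard_eq_two.1 h

variable {r : V} (hroot : par r = r) (hreach : ∀ v : V, ∃ m : ℕ, par^[m] v = r)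
  (hbin : ∀ v, (children par v).ncard = 0 ∨ (children par v).ncard = 2)
include hroot hreach hbin

/-- A core vertex has two heavy children, whose disjoint subtrees each carry at least `τ + 1`
vertices of `S`; a heavy vertex outside the core has a light child, below which there is no core
vertex. -/
lemma succ_mul_weight_heavyCore_add_one_le (hτ : 1 ≤ τ) (v : V) (hv : τ < weight par S v) :
    (τ + 1) * (weight par (heavyCore par τ S) v + 1) ≤ weight par S v := by
  induction v using tree_induction hroot hreach with | h v ih => ?_
  set C := heavyCore par τ S
  obtain ⟨a, b, hab, hch⟩ := exists_children_eq_pair hbin hτ hv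
  have mem : ∀ {x y}, children par v = {x, y} → x ∈ children par v ∧ y ∈ children par v :=
    fun h => by simp [h]
  have notMem : ∀ {y}, y ∈ children par v → weight par S y ≤ τ → v ∉ C :=
    fun hy hy' hv => (hv.2.2 _ hy).not_ge hy'
  have one_heavy : ∀ {x y}, children par v = {x, y} → τ < weight par S x →
      weight par S y ≤ τ → (τ + 1) * (weight par C v + 1) ≤ weight par S v := by
    intro x y hxy hx hy
    have hvC := weight_le_add_of_notMem hxy (notMem (mem hxy).2 hy)
    rw [weight_heavyCore_eq_zero hy, add_zero] at hvC
    calc (τ + 1) * (weight par C v + 1) ≤ (τ + 1) * (weight par C x + 1) := by gcongr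
      _ ≤ weight par S x := ih x (mem hxy).1 hx
      _ ≤ weight par S v :=
        weight_le_weight_of_mem_subtree (mem_subtree_of_mem_children (mem hxy).1) S
  rcases lt_or_ge τ (weight par S a) with ha | ha <;>
    rcases lt_or_ge τ (weight par S b) with hb | hb
  · calc (τ + 1) * (weight par C v + 1)
          ≤ (τ + 1) * (weight par C a + 1) + (τ + 1) * (weight par C b + 1) := by
            have := weight_le_add_add_one hch C
            rw [← mul_add]; exact Nat.mul_le_mul_left _ (by omega)
      _ ≤ weight par S a + weight par S b :=
          add_le_add (ih a (mem hch).1 ha) (ih b (mem hch).2 hb)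
      _ ≤ weight par S v := weight_add_weight_le hroot hreach (mem hch).1 (mem hch).2 hab S
  · exact one_heavy hch ha hb
  · exact one_heavy (hch.trans (Set.pair_comm a b)) hb ha
  · have hvC := weight_le_add_of_notMem hch (notMem (mem hch).1 ha)
    rw [weight_heavyCore_eq_zero ha, weight_heavyCore_eq_zero hb] at hvC
    rw [Nat.le_zero.1 hvC]
    omega

lemma succ_mul_ncard_heavyCore_le (hτ : 1 ≤ τ) :
    (τ + 1) * (heavyCore par τ S).ncard ≤ S.ncard := by
  rcases lt_or_ge τ (weight par S r) with hr | hr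
  · have := succ_mul_weight_heavyCore_add_one_le hroot hreach hbin hτ r hr
    rw [weight_root hreach, weight_root hreach] at this
    exact le_trans (by gcongr; omega) this
  · have hC := weight_heavyCore_eq_zero hr
    rw [weight_root hreach] at hC
    simp [hC]

end HeavyCore

lemma Antitone.eq_of_mem_diff_succ {V : Type*} {R : ℕ → Set V} (hR : Antitone R) {i j : ℕ}
    {v : V} (hi : v ∈ R i \ R (i + 1)) (hj : v ∈ R j \ R (j + 1)) : i = j := by
  by_contra h
  rcases Nat.lt_or_gt_of_ne h with h | h
  · exact hi.2 (hR h hj.1)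
  · exact hj.2 (hR h hi.1)

lemma exists_mem_diff_succ_of_notMem {V : Type*} {R : ℕ → Set V} {v : V} (h0 : v ∈ R 0)
    {i : ℕ} (hi : v ∉ R i) : ∃ j < i, v ∈ R j \ R (j + 1) := by
  induction i with
  | zero => exact absurd h0 hi
  | succ i ih =>
    by_cases h : v ∈ R i
    · exact ⟨i, i.lt_succ_self, h, hi⟩
    · obtain ⟨j, hj, hv⟩ := ih h
      exact ⟨j, hj.trans i.lt_succ_self, hv⟩

lemma subset_lowerUnion_left {V : Type*} {B X : ℕ → Set V} {i j : ℕ} (hj : 1 ≤ j)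
    (hji : j ≤ i) : B j ⊆ lowerUnion B X i :=
  fun _ hv => .inl (Set.mem_biUnion ⟨hj, hji⟩ hv)

lemma subset_lowerUnion_right {V : Type*} {B X : ℕ → Set V} {i j : ℕ} (hj : 1 ≤ j)
    (hji : j < i) : X j ⊆ lowerUnion B X i :=
  fun _ hv => .inr (Set.mem_biUnion ⟨hj, by omega⟩ hv)

section Peeling

variable {V : Type*} (par : V → V) (τ : ℕ)

def remaining : ℕ → Set V
  | 0 => Set.univ
  | i + 1 => heavyCore par τ (remaining i)

def layerB : ℕ → Set V
  | 0 => ∅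
  | i + 1 => {v | v ∈ remaining par τ i ∧ weight par (remaining par τ i) v ≤ τ}

def layerX : ℕ → Set V
  | 0 => ∅
  | i + 1 => remaining par τ i \ (layerB par τ (i + 1) ∪ remaining par τ (i + 1))

lemma remaining_antitone : Antitone (remaining par τ) :=
  antitone_nat_of_succ_le fun _ _ hv => hv.1

variable {par τ}

lemma mem_diff_of_mem_layerB {i : ℕ} {v : V} (hv : v ∈ layerB par τ (i + 1)) :
    v ∈ remaining par τ i \ remaining par τ (i + 1) :=
  ⟨hv.1, fun h => h.2.1.not_ge hv.2⟩

lemma mem_diff_of_mem_layerX {i : ℕ} {v : V} (hv : v ∈ layerX par τ (i + 1)) :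
    v ∈ remaining par τ i \ remaining par τ (i + 1) :=
  ⟨hv.1, fun h => hv.2 (.inr h)⟩

lemma disjoint_layerB {i j : ℕ} (hij : i ≠ j) : Disjoint (layerB par τ i) (layerB par τ j) := by
  rcases i with _ | i
  · exact Set.empty_disjoint _
  rcases j with _ | j
  · exact Set.disjoint_empty _
  exact Set.disjoint_left.2 fun v hi hj => hij <| congrArg (· + 1) <|
    (remaining_antitone par τ).eq_of_mem_diff_succ (mem_diff_of_mem_layerB hi)
      (mem_diff_of_mem_layerB hj)

lemma disjoint_layerX {i j : ℕ} (hij : i ≠ j) : Disjoint (layerX par τ i) (layerX par τ j) := by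
  rcases i with _ | i
  · exact Set.empty_disjoint _
  rcases j with _ | j
  · exact Set.disjoint_empty _
  exact Set.disjoint_left.2 fun v hi hj => hij <| congrArg (· + 1) <|
    (remaining_antitone par τ).eq_of_mem_diff_succ (mem_diff_of_mem_layerX hi)
      (mem_diff_of_mem_layerX hj)

lemma disjoint_layerB_layerX (i j : ℕ) : Disjoint (layerB par τ i) (layerX par τ j) := by
  rcases i with _ | i
  · exact Set.empty_disjoint _
  rcases j with _ | j
  · exact Set.disjoint_empty _
  refine Set.disjoint_left.2 fun v hi hj => ?_
  obtain rfl := (remaining_antitone par τ).eq_of_mem_diff_succ (mem_diff_of_mem_layerB hi)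
    (mem_diff_of_mem_layerX hj)
  exact hj.2 (.inl hi)

lemma exists_mem_layer_of_notMem_remaining {i : ℕ} {v : V} (hv : v ∉ remaining par τ i) :
    ∃ j < i, v ∈ layerB par τ (j + 1) ∨ v ∈ layerX par τ (j + 1) := by
  obtain ⟨j, hj, hvj, hvj'⟩ := exists_mem_diff_succ_of_notMem (Set.mem_univ v) hv
  by_cases hB : v ∈ layerB par τ (j + 1)
  · exact ⟨j, hj, .inl hB⟩
  · exact ⟨j, hj, .inr ⟨hvj, fun h => h.elim hB hvj'⟩⟩

lemma exists_mem_layer (v : V) {k : ℕ} (hk : remaining par τ k ⊆ layerB par τ (k + 1)) :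
    (∃ i, 1 ≤ i ∧ i ≤ k + 1 ∧ v ∈ layerB par τ i) ∨
      (∃ i, 1 ≤ i ∧ i ≤ k ∧ v ∈ layerX par τ i) := by
  by_cases hv : v ∈ remaining par τ k
  · exact .inl ⟨k + 1, by omega, le_rfl, hk hv⟩
  obtain ⟨j, hj, hB | hX⟩ := exists_mem_layer_of_notMem_remaining hv
  · exact .inl ⟨j + 1, by omega, by omega, hB⟩
  · exact .inr ⟨j + 1, by omega, by omega, hX⟩

lemma compl_remaining_union_layerB_subset_lowerUnion (i : ℕ) :
    (remaining par τ i)ᶜ ∪ layerB par τ (i + 1) ⊆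
      lowerUnion (layerB par τ) (layerX par τ) (i + 1) := by
  rintro v (hv | hv)
  · obtain ⟨j, hj, hB | hX⟩ := exists_mem_layer_of_notMem_remaining hv
    · exact subset_lowerUnion_left (by omega) (by omega) hB
    · exact subset_lowerUnion_right (by omega) (by omega) hX
  · exact subset_lowerUnion_left (by omega) le_rfl hv

lemma exists_mem_children_of_mem_layerX {i : ℕ} {v : V} (hv : v ∈ layerX par τ (i + 1)) :
    ∃ u ∈ children par v, u ∈ (remaining par τ i)ᶜ ∪ layerB par τ (i + 1) := by
  obtain ⟨hvR, hv'⟩ := hv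
  by_contra! h
  refine hv' (.inr ⟨hvR, not_le.1 fun hw => hv' (.inl ⟨hvR, hw⟩), fun u hu => ?_⟩)
  have hu' := h u hu
  by_contra! hw
  exact hu' (.inr ⟨by_contra fun hR => hu' (.inl hR), hw⟩)

variable [Finite V]

lemma mem_of_mem_children_of_mem_layerB {i : ℕ} {v u : V} (hv : v ∈ layerB par τ (i + 1))
    (hu : u ∈ children par v) : u ∈ (remaining par τ i)ᶜ ∪ layerB par τ (i + 1) := by
  by_cases hR : u ∈ remaining par τ i
  · exact .inr ⟨hR, (weight_le_weight_of_mem_subtree (mem_subtree_of_mem_children hu) _).trans hv.2⟩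
  · exact .inl hR

variable {r : V} (hroot : par r = r) (hreach : ∀ v : V, ∃ m : ℕ, par^[m] v = r)
include hroot hreach

lemma ncard_component_layerB_le {i : ℕ} {v : V} (hv : v ∈ layerB par τ (i + 1)) :
    {u | Relation.ReflTransGen (adjOn par (layerB par τ (i + 1))) v u}.ncard ≤ τ := by
  obtain ⟨m, hm, hsub⟩ := exists_component_subset_subtree hroot hreach hv
  exact (Set.ncard_le_ncard (hsub.trans (Set.inter_subset_inter_right _ fun _ h => h.1))).trans hm.2

lemma pow_mul_ncard_remaining_le
    (hbin : ∀ v, (children par v).ncard = 0 ∨ (children par v).ncard = 2) (hτ : 1 ≤ τ)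
    (i : ℕ) : (τ + 1) ^ i * (remaining par τ i).ncard ≤ Nat.card V := by
  induction i with
  | zero => simp [remaining]
  | succ i ih =>
    calc (τ + 1) ^ (i + 1) * (remaining par τ (i + 1)).ncard
        = (τ + 1) ^ i * ((τ + 1) * (remaining par τ (i + 1)).ncard) := by ring
      _ ≤ (τ + 1) ^ i * (remaining par τ i).ncard :=
          Nat.mul_le_mul_left _ (succ_mul_ncard_heavyCore_le hroot hreach hbin hτ)
      _ ≤ Nat.card V := ih

/-- After `k` rounds fewer than `τ + 1` vertices remain, so all of them are light. -/
lemma remaining_subset_layerB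
    (hbin : ∀ v, (children par v).ncard = 0 ∨ (children par v).ncard = 2) (hτ : 1 ≤ τ)
    {k : ℕ} (hk : Nat.card V < (τ + 1) ^ (k + 1)) :
    remaining par τ k ⊆ layerB par τ (k + 1) := by
  have hcard : (remaining par τ k).ncard ≤ τ := by
    have := pow_mul_ncard_remaining_le hroot hreach hbin hτ k
    rw [pow_succ] at hk
    exact Nat.le_of_lt_succ (Nat.lt_of_mul_lt_mul_left (this.trans_lt hk))
  exact fun v hv => ⟨hv, (weight_le_ncard _ v).trans hcard⟩

end Peeling

lemma lt_succ_floor_rpow_one_div_pow (n : ℕ) {k : ℕ} (hk : k ≠ 0) :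
    n < (⌊(n : ℝ) ^ ((1 : ℝ) / k)⌋₊ + 1) ^ k := by
  set x := (n : ℝ) ^ ((1 : ℝ) / k)
  have hx : x ^ k = n := by
    rw [← Real.rpow_natCast, ← Real.rpow_mul n.cast_nonneg,
      one_div_mul_cancel (by exact_mod_cast hk), Real.rpow_one]
  have : (n : ℝ) < ((⌊x⌋₊ : ℝ) + 1) ^ k :=
    hx ▸ pow_lt_pow_left₀ (Nat.lt_floor_add_one x) (by positivity) hk
  exact_mod_cast this

theorem stmt10_general {V : Type*} [Fintype V] (k : ℕ) (hk : 1 ≤ k)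
    (par : V → V) (r : V) (hroot : par r = r)
    (hreach : ∀ v : V, ∃ m : ℕ, par^[m] v = r)
    (hbin : ∀ v : V, {u | u ≠ v ∧ par u = v}.ncard = 0 ∨ {u | u ≠ v ∧ par u = v}.ncard = 2)
    (n : ℕ) (hn : n = Fintype.card V) (hn1 : 1 ≤ n) :
    ∃ B X : ℕ → Set V,
      -- the sets cover all of V …
      (∀ v : V, (∃ i, 1 ≤ i ∧ i ≤ k ∧ v ∈ B i) ∨ (∃ i, 1 ≤ i ∧ i ≤ k - 1 ∧ v ∈ X i)) ∧
      -- … and are pairwise disjoint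
      (∀ i j, 1 ≤ i → i ≤ k → 1 ≤ j → j ≤ k → i ≠ j → B i ∩ B j = ∅) ∧
      (∀ i j, 1 ≤ i → i ≤ k - 1 → 1 ≤ j → j ≤ k - 1 → i ≠ j → X i ∩ X j = ∅) ∧
      (∀ i j, 1 ≤ i → i ≤ k → 1 ≤ j → j ≤ k - 1 → B i ∩ X j = ∅) ∧
      -- (P1)
      (∀ i, 1 ≤ i → i ≤ k → ∀ v ∈ B i,
        (({u | Relation.ReflTransGen (adjOn par (B i)) v u}).ncard : ℝ) ≤
          (n : ℝ) ^ ((1 : ℝ) / (k : ℝ))) ∧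
      -- (P2)
      (∀ i, 1 ≤ i → i ≤ k - 1 → ∀ v ∈ X i,
        ∃ u : V, u ≠ v ∧ par u = v ∧ u ∈ lowerUnion B X i) ∧
      -- (P3)
      (∀ i, 1 ≤ i → i ≤ k → ∀ v ∈ B i, ∀ u : V, u ≠ v → par u = v →
        u ∈ lowerUnion B X i) := by
  set τ := ⌊(n : ℝ) ^ ((1 : ℝ) / k)⌋₊
  have hτ : 1 ≤ τ :=
    Nat.one_le_floor_iff _ |>.2 (Real.one_le_rpow (by exact_mod_cast hn1) (by positivity))
  have hτn : (τ : ℝ) ≤ (n : ℝ) ^ ((1 : ℝ) / k) := Nat.floor_le (by positivity)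
  have hnτ : Nat.card V < (τ + 1) ^ k := by
    rw [Nat.card_eq_fintype_card, ← hn]
    exact lt_succ_floor_rpow_one_div_pow n (by omega)
  obtain ⟨k, rfl⟩ : ∃ k', k = k' + 1 := ⟨k - 1, by omega⟩
  have hlast := remaining_subset_layerB hroot hreach hbin hτ hnτ
  simp only [Nat.add_sub_cancel]
  refine ⟨layerB par τ, layerX par τ, fun v => exists_mem_layer v hlast,
    fun i j _ _ _ _ hij => (disjoint_layerB hij).inter_eq,
    fun i j _ _ _ _ hij => (disjoint_layerX hij).inter_eq,
    fun i j _ _ _ _ => (disjoint_layerB_layerX i j).inter_eq, ?_, ?_, ?_⟩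
  · rintro (_ | i) hi - v hv
    · omega
    · exact (Nat.cast_le.2 (ncard_component_layerB_le hroot hreach hv)).trans hτn
  · rintro (_ | i) hi - v hv
    · omega
    · obtain ⟨u, hu, hu'⟩ := exists_mem_children_of_mem_layerX hv
      exact ⟨u, hu.1, hu.2, compl_remaining_union_layerB_subset_lowerUnion i hu'⟩
  · rintro (_ | i) hi - v hv u hu hpu
    · omega
    · exact compl_remaining_union_layerB_subset_lowerUnion i
        (mem_of_mem_children_of_mem_layerB hv ⟨hu, hpu⟩)

/-- every finite rooted tree with `n ≥ 1` vertices in which every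
vertex has exactly 0 or 2 children admits a partition
`V = B₁ ∪ X₁ ∪ B₂ ∪ X₂ ∪ ⋯ ∪ X_{k−1} ∪ B_k` satisfying:
(P1) each connected component of each `B_i` has at most `n^{1/k}` vertices;
(P2) every vertex of `X_i` has a child in `B₁ ∪ X₁ ∪ ⋯ ∪ X_{i−1} ∪ B_i`;
(P3) every child of every vertex of `B_i` lies in `B₁ ∪ X₁ ∪ ⋯ ∪ X_{i−1} ∪ B_i`. -/
theorem stmt10 {V : Type*} [Fintype V] (k : ℕ) (hk : 1 ≤ k)
    (par : V → V) (r : V) (hroot : par r = r)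
    (hnr : ∀ v : V, v ≠ r → par v ≠ v)
    (hreach : ∀ v : V, ∃ m : ℕ, par^[m] v = r)
    (hbin : ∀ v : V, {u | u ≠ v ∧ par u = v}.ncard = 0 ∨ {u | u ≠ v ∧ par u = v}.ncard = 2)
    (n : ℕ) (hn : n = Fintype.card V) (hn1 : 1 ≤ n) :
    ∃ B X : ℕ → Set V,
      -- the sets cover all of V …
      (∀ v : V, (∃ i, 1 ≤ i ∧ i ≤ k ∧ v ∈ B i) ∨ (∃ i, 1 ≤ i ∧ i ≤ k - 1 ∧ v ∈ X i)) ∧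
      -- … and are pairwise disjoint
      (∀ i j, 1 ≤ i → i ≤ k → 1 ≤ j → j ≤ k → i ≠ j → B i ∩ B j = ∅) ∧
      (∀ i j, 1 ≤ i → i ≤ k - 1 → 1 ≤ j → j ≤ k - 1 → i ≠ j → X i ∩ X j = ∅) ∧
      (∀ i j, 1 ≤ i → i ≤ k → 1 ≤ j → j ≤ k - 1 → B i ∩ X j = ∅) ∧
      -- (P1)
      (∀ i, 1 ≤ i → i ≤ k → ∀ v ∈ B i,
        (({u | Relation.ReflTransGen (adjOn par (B i)) v u}).ncard : ℝ) ≤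
          (n : ℝ) ^ ((1 : ℝ) / (k : ℝ))) ∧
      -- (P2)
      (∀ i, 1 ≤ i → i ≤ k - 1 → ∀ v ∈ X i,
        ∃ u : V, u ≠ v ∧ par u = v ∧ u ∈ lowerUnion B X i) ∧
      -- (P3)
      (∀ i, 1 ≤ i → i ≤ k → ∀ v ∈ B i, ∀ u : V, u ≠ v → par u = v →
        u ∈ lowerUnion B X i) :=
  stmt10_general k hk par r hroot hreach hbin n hn hn1
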